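/- arXiv:1302.6124 — 3 statements merged into one kernel-verified Lean document; each statement's English description precedes it below -/
import Mathlib

section
/- Let N ∈ ℕ and let (φ_j)_{j=1}^N and (ψ_k)_{k∈ℕ} be orthonormal families in a Hilbert space, with (ψ_k) an orthonormal basis. Then the modulus of the determinant of the N×N overlap matrix (⟨φ_j, ψ_k⟩)_{j,k=1,…,N} satisfies |det(⟨φ_j, ψ_k⟩)| ≤ exp(−(1/2) Σ_{j=1}^N Σ_{k=N+1}^∞ |⟨φ_j, ψ_k⟩|²). -/
/-!
Write `M` for the overlap matrix. Then `|det M|² = det (M Mᴴ) = ∏ λᵢ` over the eigenvalues `λᵢ ≥ 0`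
of `M Mᴴ`, and `λ ≤ exp (λ - 1)` gives `|det M|² ≤ exp (tr (M Mᴴ) - N)`. By Parseval, row `j`
of `M` has squared norm `1 - ∑_{k ≥ N} |⟪φ j, ψ k⟫|²`, so `tr (M Mᴴ) - N` is minus the double
tail sum; taking square roots gives the bound.
-/

open scoped InnerProductSpace ComplexOrder Matrix

theorem Real.prod_le_exp_sum_sub_one {ι : Type*} (s : Finset ι) {x : ι → ℝ}
    (hx : ∀ i ∈ s, 0 ≤ x i) : ∏ i ∈ s, x i ≤ Real.exp (∑ i ∈ s, (x i - 1)) := by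
  rw [Real.exp_sum]
  exact Finset.prod_le_prod hx fun i _ => by linarith [Real.add_one_le_exp (x i - 1)]

theorem Matrix.PosSemidef.re_det_le_exp_re_trace_sub_card {𝕜 n : Type*} [RCLike 𝕜] [Fintype n]
    [DecidableEq n] {A : Matrix n n 𝕜} (hA : A.PosSemidef) :
    RCLike.re A.det ≤ Real.exp (RCLike.re A.trace - Fintype.card n) := by
  rw [hA.isHermitian.det_eq_prod_eigenvalues, hA.isHermitian.trace_eq_sum_eigenvalues,
    ← RCLike.ofReal_prod, ← RCLike.ofReal_sum, RCLike.ofReal_re, RCLike.ofReal_re]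
  simpa [Finset.sum_sub_distrib] using
    Real.prod_le_exp_sum_sub_one Finset.univ fun i _ => hA.eigenvalues_nonneg i

theorem Matrix.norm_det_sq_le_exp_sum_norm_sq_sub_card {𝕜 n : Type*} [RCLike 𝕜] [Fintype n]
    [DecidableEq n] (M : Matrix n n 𝕜) :
    ‖M.det‖ ^ 2 ≤ Real.exp (∑ i, ∑ j, ‖M i j‖ ^ 2 - Fintype.card n) := by
  have h := (Matrix.posSemidef_self_mul_conjTranspose M).re_det_le_exp_re_trace_sub_card
  have hdet : RCLike.re (M * Mᴴ).det = ‖M.det‖ ^ 2 := by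
    simp [Matrix.det_mul, Matrix.det_conjTranspose, RCLike.mul_conj]
  have htr : RCLike.re (M * Mᴴ).trace = ∑ i, ∑ j, ‖M i j‖ ^ 2 := by
    simp [Matrix.trace, Matrix.mul_apply, RCLike.mul_conj]
  rwa [hdet, htr] at h

theorem HilbertBasis.hasSum_norm_inner_sq {ι 𝕜 E : Type*} [RCLike 𝕜] [NormedAddCommGroup E]
    [InnerProductSpace 𝕜 E] (b : HilbertBasis ι 𝕜 E) (x : E) :
    HasSum (fun i => ‖⟪x, b i⟫_𝕜‖ ^ 2) (‖x‖ ^ 2) := by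
  have h := b.hasSum_inner_mul_inner x x
  simp_rw [← inner_conj_symm (b _) x, RCLike.mul_conj, inner_self_eq_norm_sq_to_K] at h
  exact_mod_cast h

theorem HilbertBasis.sum_range_add_tsum_norm_inner_sq {𝕜 E : Type*} [RCLike 𝕜]
    [NormedAddCommGroup E] [InnerProductSpace 𝕜 E] (b : HilbertBasis ℕ 𝕜 E) (x : E) (N : ℕ) :
    ∑ k ∈ Finset.range N, ‖⟪x, b k⟫_𝕜‖ ^ 2 + ∑' k : {k : ℕ // N ≤ k}, ‖⟪x, b k⟫_𝕜‖ ^ 2 =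
      ‖x‖ ^ 2 := by
  have h := b.hasSum_norm_inner_sq x
  rw [← h.tsum_eq, ← h.summable.sum_add_tsum_compl (s := Finset.range N)]
  congr 1
  exact (Equiv.tsum_eq (Equiv.subtypeEquivRight (q := fun k => N ≤ k) fun k => by simp) _).symm

theorem stmt0_general {H : Type*} [NormedAddCommGroup H] [InnerProductSpace ℂ H]
    (N : ℕ) (φ : Fin N → H) (hφ : Orthonormal ℂ φ)
    (ψ : HilbertBasis ℕ ℂ H) :
    ‖
        (Matrix.det (Matrix.of fun j k : Fin N => ⟪φ j, ψ (k : ℕ)⟫_ℂ))‖ ≤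
      Real.exp (-(1/2) * ∑ j : Fin N,
        ∑' k : {k : ℕ // N ≤ k}, ‖⟪φ j, ψ (k : ℕ)⟫_ℂ‖ ^ 2) := by
  set M : Matrix (Fin N) (Fin N) ℂ := Matrix.of fun j k => ⟪φ j, ψ k⟫_ℂ
  set tail : Fin N → ℝ := fun j => ∑' k : {k : ℕ // N ≤ k}, ‖⟪φ j, ψ k⟫_ℂ‖ ^ 2
  have hrow (j : Fin N) : ∑ k, ‖M j k‖ ^ 2 = 1 - tail j := by
    have h := ψ.sum_range_add_tsum_norm_inner_sq (φ j) N
    rw [hφ.1 j, ← Fin.sum_univ_eq_sum_range (fun k => ‖⟪φ j, ψ k⟫_ℂ‖ ^ 2)] at h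
    simp only [M, Matrix.of_apply, tail]
    linarith
  have hsq : ‖M.det‖ ^ 2 ≤ Real.exp (-(1/2) * ∑ j, tail j) ^ 2 := by
    calc ‖M.det‖ ^ 2 ≤ Real.exp (∑ j, ∑ k, ‖M j k‖ ^ 2 - N) := by
          simpa using M.norm_det_sq_le_exp_sum_norm_sq_sub_card
      _ = Real.exp (-(1/2) * ∑ j, tail j) ^ 2 := by
          rw [← Real.exp_nat_mul, Finset.sum_congr rfl fun j _ => hrow j, Finset.sum_sub_distrib]
          simp only [Finset.sum_const, Finset.card_univ, Fintype.card_fin, nsmul_eq_mul, mul_one]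
          ring_nf
  exact (pow_le_pow_iff_left₀ (norm_nonneg _) (Real.exp_nonneg _) two_ne_zero).mp hsq

/-- Hadamard bound on the ground-state overlap: for an orthonormal family
`φ : Fin N → H` and a Hilbert (orthonormal) basis `ψ : ℕ → H` of a complex
Hilbert space `H`, the modulus of the determinant of the overlap matrix
`(⟪φ j, ψ k⟫)_{j,k < N}` is at most
`exp(-(1/2) ∑_{j<N} ∑_{k ≥ N} |⟪φ j, ψ k⟫|²)`. -/
theorem stmt0 {H : Type*} [NormedAddCommGroup H] [InnerProductSpace ℂ H] [CompleteSpace H]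
    (N : ℕ) (φ : Fin N → H) (hφ : Orthonormal ℂ φ)
    (ψ : HilbertBasis ℕ ℂ H) :
    ‖
        (Matrix.det (Matrix.of fun j k : Fin N => ⟪φ j, ψ (k : ℕ)⟫_ℂ))‖ ≤
      Real.exp (-(1/2) * ∑ j : Fin N,
        ∑' k : {k : ℕ // N ≤ k}, ‖⟪φ j, ψ (k : ℕ)⟫_ℂ‖ ^ 2) :=
  stmt0_general N φ hφ ψ
end

section
/- Let A > 0 and let κ₁, κ₂ ∈ L¹_loc(ℝ) be non-negative with 0 a Lebesgue point of both κ₁ and κ₂ (so that C₁ := sup_{x∈(−A,0)} (−x)^{−1}∫_x^0 κ₁ and C₂ := sup_{y∈(0,1)} y^{−1}∫_0^y κ₂ are finite). Then for all η ∈ (0,1): ∫_{−A}^0 ∫_0^η κ₁(x)κ₂(y)/(y−x) dy dx ≤ C₁C₂ [A ln(1 + η/A) + η ln(1 + A/η)]. In particular, the double integral is O(η |ln η|) as η ↓ 0. -/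
/-!
Both integrations are instances of one majorization principle: if `κ ≥ 0` has averages at most
`C` over every initial segment `(a, t)` of `(a, b)` and `g ≥ 0` is antitone on `(a, b)`, then
`∫ κ g ≤ C ∫ g`. This follows from the layer-cake formula `∫ κ g = ∫₀^∞ (∫_{g > λ} κ) dλ`,
since each superlevel set `{g > λ}` is an initial segment up to an endpoint, so that
`∫_{g > λ} κ ≤ C |{g > λ}|`. In `y`, with `g y = (y - x)⁻¹`,
this bounds the inner integral by `C₂ ∫₀^η (y - x)⁻¹ dy = C₂ (log (η - x) - log (-x))`. In `x`,
with the roles of the endpoints reflected, it bounds the outer integral by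
`C₁ C₂ ∫_{-A}^0 (log (η - x) - log (-x)) dx`, which is computed in closed form.
-/

open MeasureTheory intervalIntegral Set
open scoped ENNReal

theorem lintegral_mul_ofReal_le_of_superlevelSets {α : Type*} [MeasurableSpace α]
    {μ : Measure α} [SFinite μ] {κ : α → ℝ≥0∞} {g : α → ℝ} {C : ℝ≥0∞}
    (hκ : AEMeasurable κ μ) (hg : AEMeasurable g μ) (hg0 : 0 ≤ᵐ[μ] g)
    (hC : ∀ t : ℝ, ∫⁻ x in {x | t < g x}, κ x ∂μ ≤ C * μ {x | t < g x}) :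
    ∫⁻ x, κ x * ENNReal.ofReal (g x) ∂μ ≤ C * ∫⁻ x, ENNReal.ofReal (g x) ∂μ := by
  have hac := withDensity_absolutelyContinuous μ κ
  have hmeas : Measurable fun t => μ {x | t < g x} :=
    Antitone.measurable fun s t hst => measure_mono fun x hx => lt_of_le_of_lt hst hx
  calc ∫⁻ x, κ x * ENNReal.ofReal (g x) ∂μ
      = ∫⁻ x, ENNReal.ofReal (g x) ∂μ.withDensity κ :=
        (lintegral_withDensity_eq_lintegral_mul₀ hκ hg.ennreal_ofReal).symm
    _ = ∫⁻ t in Ioi 0, ∫⁻ x in {x | t < g x}, κ x ∂μ := by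
        rw [lintegral_eq_lintegral_meas_lt _ (hac.ae_le hg0) (hg.mono_ac hac)]
        simp only [withDensity_apply']
    _ ≤ ∫⁻ t in Ioi 0, C * μ {x | t < g x} := lintegral_mono fun t => hC t
    _ = C * ∫⁻ x, ENNReal.ofReal (g x) ∂μ := by
        rw [lintegral_const_mul _ hmeas, lintegral_eq_lintegral_meas_lt μ hg0 hg]

theorem setLIntegral_le_mul_volume_of_initialSegment {κ : ℝ → ℝ≥0∞} {a b : ℝ} {C : ℝ≥0∞}
    {S : Set ℝ} (hSab : S ⊆ Ioo a b) (hS : ∀ y ∈ S, Ioo a y ⊆ S)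
    (hC : ∀ t ∈ Ioc a b, ∫⁻ x in Ioo a t, κ x ≤ C * ENNReal.ofReal (t - a)) :
    ∫⁻ x in S, κ x ≤ C * volume S := by
  rcases S.eq_empty_or_nonempty with rfl | ⟨y₀, hy₀⟩
  · simp
  have hbdd : BddAbove S := ⟨b, fun y hy => (hSab hy).2.le⟩
  set t := sSup S
  have hSt : S ⊆ Ioc a t := fun y hy => ⟨(hSab hy).1, le_csSup hbdd hy⟩
  have htS : Ioo a t ⊆ S := fun z hz => by
    obtain ⟨y, hy, hzy⟩ := (lt_csSup_iff hbdd ⟨y₀, hy₀⟩).1 hz.2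
    exact hS y hy ⟨hz.1, hzy⟩
  have ht : t ∈ Ioc a b :=
    ⟨(hSab hy₀).1.trans_le (le_csSup hbdd hy₀), csSup_le ⟨y₀, hy₀⟩ fun y hy => (hSab hy).2.le⟩
  calc ∫⁻ x in S, κ x
      ≤ ∫⁻ x in Ioc a t, κ x := lintegral_mono_set hSt
    _ = ∫⁻ x in Ioo a t, κ x := (setLIntegral_congr Ioo_ae_eq_Ioc).symm
    _ ≤ C * volume (Ioo a t) := by rw [Real.volume_Ioo]; exact hC t ht
    _ ≤ C * volume S := by gcongr

theorem lintegral_mul_le_of_antitoneOn {κ : ℝ → ℝ≥0∞} {g : ℝ → ℝ} {a b : ℝ} {C : ℝ≥0∞}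
    (hκ : AEMeasurable κ (volume.restrict (Ioo a b))) (hg : AntitoneOn g (Ioo a b))
    (hg0 : ∀ x ∈ Ioo a b, 0 ≤ g x)
    (hC : ∀ t ∈ Ioc a b, ∫⁻ x in Ioo a t, κ x ≤ C * ENNReal.ofReal (t - a)) :
    ∫⁻ x in Ioo a b, κ x * ENNReal.ofReal (g x) ≤ C * ∫⁻ x in Ioo a b, ENNReal.ofReal (g x) := by
  refine lintegral_mul_ofReal_le_of_superlevelSets hκ
    (aemeasurable_restrict_of_antitoneOn measurableSet_Ioo hg)
    (ae_restrict_of_forall_mem measurableSet_Ioo hg0) fun s => ?_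
  rw [Measure.restrict_restrict' measurableSet_Ioo, Measure.restrict_apply' measurableSet_Ioo]
  refine setLIntegral_le_mul_volume_of_initialSegment inter_subset_right
    (fun y hy z hz => ⟨?_, hz.1, hz.2.trans hy.2.2⟩) hC
  exact hy.1.trans_le (hg ⟨hz.1, hz.2.trans hy.2.2⟩ hy.2 hz.2.le)

theorem intervalIntegral.integral_le_mul_sub_of_forall_Ioo {κ : ℝ → ℝ} {a b C : ℝ} (hab : a < b)
    (hκ : IntervalIntegrable κ volume a b)
    (hC : ∀ t ∈ Ioo a b, ∫ x in a..t, κ x ≤ C * (t - a)) :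
    ∀ t ∈ Ioc a b, ∫ x in a..t, κ x ≤ C * (t - a) := by
  have hcont := continuousOn_primitive_interval ((intervalIntegrable_iff' (by finiteness)).1 hκ)
  rw [uIcc_of_le hab.le] at hcont
  intro t ht
  exact ContinuousWithinAt.closure_le (s := Ioo a b)
    (by rw [closure_Ioo hab.ne]; exact Ioc_subset_Icc_self ht)
    ((hcont t (Ioc_subset_Icc_self ht)).mono Ioo_subset_Icc_self) (by fun_prop) hC

theorem intervalIntegral.integral_mul_le_of_antitoneOn {κ g : ℝ → ℝ} {a b C : ℝ} (hab : a ≤ b)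
    (hκ : IntervalIntegrable κ volume a b) (hκ0 : ∀ x ∈ Ioo a b, 0 ≤ κ x)
    (hg : AntitoneOn g (Ioo a b)) (hg0 : ∀ x ∈ Ioo a b, 0 ≤ g x)
    (hgi : IntervalIntegrable g volume a b)
    (hC : ∀ t ∈ Ioo a b, ∫ x in a..t, κ x ≤ C * (t - a)) :
    IntervalIntegrable (fun x => κ x * g x) volume a b ∧
      ∫ x in a..b, κ x * g x ≤ C * ∫ x in a..b, g x := by
  rcases hab.eq_or_lt with rfl | hab
  · simp
  have hC' := integral_le_mul_sub_of_forall_Ioo hab hκ hC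
  rw [intervalIntegrable_iff_integrableOn_Ioo_of_le hab.le] at hκ hgi ⊢
  simp only [integral_of_le hab.le, integral_Ioc_eq_integral_Ioo]
  have hC0 : 0 ≤ C := by
    have h := hC' b (right_mem_Ioc.2 hab)
    rw [integral_of_le hab.le, integral_Ioc_eq_integral_Ioo] at h
    exact nonneg_of_mul_nonneg_left ((setIntegral_nonneg measurableSet_Ioo hκ0).trans h)
      (sub_pos.2 hab)
  have hCl : ∀ t ∈ Ioc a b, ∫⁻ x in Ioo a t, ENNReal.ofReal (κ x)
      ≤ ENNReal.ofReal C * ENNReal.ofReal (t - a) := by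
    intro t ht
    have h := hC' t ht
    rw [integral_of_le ht.1.le, integral_Ioc_eq_integral_Ioo] at h
    rw [← ofReal_integral_eq_lintegral_ofReal (hκ.mono_set (Ioo_subset_Ioo_right ht.2))
      (ae_restrict_of_forall_mem measurableSet_Ioo fun x hx => hκ0 x ⟨hx.1, hx.2.trans_le ht.2⟩),
      ← ENNReal.ofReal_mul' (sub_nonneg.2 ht.1.le)]
    exact ENNReal.ofReal_le_ofReal h
  have hprod0 : 0 ≤ᵐ[volume.restrict (Ioo a b)] fun x => κ x * g x :=
    ae_restrict_of_forall_mem measurableSet_Ioo fun x hx => mul_nonneg (hκ0 x hx) (hg0 x hx)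
  have hprod : ∫⁻ x in Ioo a b, ENNReal.ofReal (κ x * g x)
      ≤ ENNReal.ofReal (C * ∫ x in Ioo a b, g x) := by
    rw [ENNReal.ofReal_mul hC0, ofReal_integral_eq_lintegral_ofReal hgi
      (ae_restrict_of_forall_mem measurableSet_Ioo hg0)]
    refine le_trans (le_of_eq (setLIntegral_congr_fun measurableSet_Ioo fun x hx => ?_))
      (lintegral_mul_le_of_antitoneOn hκ.aemeasurable.ennreal_ofReal hg hg0 hCl)
    exact ENNReal.ofReal_mul (hκ0 x hx)
  have hmeas := hκ.aestronglyMeasurable.mul hgi.aestronglyMeasurable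
  refine ⟨⟨hmeas, (hasFiniteIntegral_iff_ofReal hprod0).2
    (hprod.trans_lt ENNReal.ofReal_lt_top)⟩, ?_⟩
  rw [integral_eq_lintegral_of_nonneg_ae hprod0 hmeas]
  exact ENNReal.toReal_le_of_le_ofReal
    (mul_nonneg hC0 (setIntegral_nonneg measurableSet_Ioo hg0)) hprod

theorem intervalIntegral.integral_mul_le_of_monotoneOn {κ g : ℝ → ℝ} {a b C : ℝ} (hab : a ≤ b)
    (hκ : IntervalIntegrable κ volume a b) (hκ0 : ∀ x ∈ Ioo a b, 0 ≤ κ x)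
    (hg : MonotoneOn g (Ioo a b)) (hg0 : ∀ x ∈ Ioo a b, 0 ≤ g x)
    (hgi : IntervalIntegrable g volume a b)
    (hC : ∀ t ∈ Ioo a b, ∫ x in t..b, κ x ≤ C * (b - t)) :
    IntervalIntegrable (fun x => κ x * g x) volume a b ∧
      ∫ x in a..b, κ x * g x ≤ C * ∫ x in a..b, g x := by
  have hneg : ∀ {x}, x ∈ Ioo (-b) (-a) → -x ∈ Ioo a b := fun hx =>
    ⟨lt_neg_of_lt_neg hx.2, neg_lt_of_neg_lt hx.1⟩
  have h := integral_mul_le_of_antitoneOn (κ := fun x => κ (-x)) (g := fun x => g (-x))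
    (neg_le_neg hab) ((IntervalIntegrable.iff_comp_neg (by finiteness)).1 hκ).symm
    (fun x hx => hκ0 _ (hneg hx))
    (fun x hx y hy hxy => hg (hneg hy) (hneg hx) (neg_le_neg hxy))
    (fun x hx => hg0 _ (hneg hx)) ((IntervalIntegrable.iff_comp_neg (by finiteness)).1 hgi).symm
    (fun t ht => by simpa [integral_comp_neg, sub_eq_add_neg, add_comm] using hC _ (hneg ht))
  rw [integral_comp_neg (fun x => κ x * g x), integral_comp_neg g, neg_neg, neg_neg] at h
  exact ⟨by simpa using ((IntervalIntegrable.iff_comp_neg (by finiteness)).1 h.1).symm, h.2⟩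

theorem intervalIntegral.integral_mono_of_nonneg_on_Ioo {f g : ℝ → ℝ} {a b : ℝ} (hab : a ≤ b)
    (hg : IntervalIntegrable g volume a b) (hf0 : ∀ x ∈ Ioo a b, 0 ≤ f x)
    (hfg : ∀ x ∈ Ioo a b, f x ≤ g x) :
    ∫ x in a..b, f x ≤ ∫ x in a..b, g x := by
  simp only [integral_of_le hab, integral_Ioc_eq_integral_Ioo]
  exact integral_mono_of_nonneg (ae_restrict_of_forall_mem measurableSet_Ioo hf0)
    (hg.1.mono_set Ioo_subset_Ioc_self) (ae_restrict_of_forall_mem measurableSet_Ioo hfg)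

theorem integral_inv_sub_of_neg {x η : ℝ} (hx : x < 0) (hη : 0 ≤ η) :
    ∫ y in (0 : ℝ)..η, (y - x)⁻¹ = Real.log (η - x) - Real.log (-x) := by
  rw [integral_comp_sub_right (fun y => y⁻¹), zero_sub,
    integral_inv_of_pos (neg_pos.2 hx) (by linarith), Real.log_div (by linarith) (by linarith)]

theorem intervalIntegrable_log_sub (c a b : ℝ) :
    IntervalIntegrable (fun x => Real.log (c - x)) volume a b := by
  simpa using intervalIntegrable_log'.comp_sub_left (a := c - a) (b := c - b) c

theorem monotoneOn_log_sub_sub_log_neg {η : ℝ} (hη : 0 ≤ η) :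
    MonotoneOn (fun x => Real.log (η - x) - Real.log (-x)) (Iio 0) := by
  intro x hx y hy hxy
  have hx : 0 < -x := neg_pos.2 hx
  have hy : 0 < -y := neg_pos.2 hy
  have h : Real.log ((η - x) * -y) ≤ Real.log ((η - y) * -x) :=
    Real.log_le_log (by nlinarith) (by nlinarith)
  rw [Real.log_mul (by linarith) hy.ne', Real.log_mul (by linarith) hx.ne'] at h
  dsimp only
  linarith

theorem integral_log_sub_sub_log_neg {A η : ℝ} (hA : 0 < A) (hη : 0 < η) :
    ∫ x in (-A)..0, (Real.log (η - x) - Real.log (-x))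
      = A * Real.log (1 + η / A) + η * Real.log (1 + A / η) := by
  have h₁ : 1 + η / A = (η + A) / A := by field_simp; ring
  have h₂ : 1 + A / η = (η + A) / η := by field_simp
  simp only [Real.log_neg_eq_log]
  rw [intervalIntegral.integral_sub (intervalIntegrable_log_sub _ _ _) intervalIntegrable_log',
    integral_comp_sub_left (fun x => Real.log x), integral_log, integral_log, h₁, h₂,
    Real.log_div (by positivity) hA.ne', Real.log_div (by positivity) hη.ne']
  simp only [sub_zero, sub_neg_eq_add, Real.log_zero, Real.log_neg_eq_log, mul_zero]
  ring

theorem integral_mul_inv_sub_le {κ : ℝ → ℝ} {x η C : ℝ} (hx : x < 0) (hη : 0 ≤ η)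
    (hκ : IntervalIntegrable κ volume 0 η) (hκ0 : ∀ y ∈ Ioo 0 η, 0 ≤ κ y)
    (hC : ∀ t ∈ Ioo 0 η, ∫ y in (0 : ℝ)..t, κ y ≤ C * t) :
    ∫ y in (0 : ℝ)..η, κ y * (y - x)⁻¹ ≤ C * (Real.log (η - x) - Real.log (-x)) := by
  have hpos : ∀ y ∈ Icc 0 η, 0 < y - x := fun y hy => by linarith [hy.1]
  rw [← integral_inv_sub_of_neg hx hη]
  exact (integral_mul_le_of_antitoneOn hη hκ hκ0
    (fun y hy z _ hyz => inv_anti₀ (hpos y (Ioo_subset_Icc_self hy)) (by linarith))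
    (fun y hy => (inv_pos.2 (hpos y (Ioo_subset_Icc_self hy))).le)
    (intervalIntegrable_inv (fun y hy => (hpos y (by rwa [uIcc_of_le hη] at hy)).ne')
      (by fun_prop))
    (fun t ht => by simpa using hC t ht)).2

theorem integral_mul_log_sub_sub_log_neg_le {κ : ℝ → ℝ} {A η C : ℝ} (hA : 0 < A) (hη : 0 < η)
    (hκ : IntervalIntegrable κ volume (-A) 0) (hκ0 : ∀ x ∈ Ioo (-A) 0, 0 ≤ κ x)
    (hC : ∀ t ∈ Ioo (-A) 0, ∫ x in t..0, κ x ≤ C * (-t)) :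
    IntervalIntegrable (fun x => κ x * (Real.log (η - x) - Real.log (-x))) volume (-A) 0 ∧
      ∫ x in (-A)..0, κ x * (Real.log (η - x) - Real.log (-x)) ≤
        C * (A * Real.log (1 + η / A) + η * Real.log (1 + A / η)) := by
  rw [← integral_log_sub_sub_log_neg hA hη]
  exact integral_mul_le_of_monotoneOn (neg_nonpos.2 hA.le) hκ hκ0
    ((monotoneOn_log_sub_sub_log_neg hη.le).mono fun x hx => hx.2)
    (fun x hx => sub_nonneg.2 (Real.log_le_log (neg_pos.2 hx.2) (by linarith [hx.2])))
    ((intervalIntegrable_log_sub η _ _).sub (by simp [intervalIntegrable_log']))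
    (fun t ht => by simpa using hC t ht)

/-- Double-integral bound: if `κ₁, κ₂ ≥ 0` are locally integrable, with
`∫_x^0 κ₁ ≤ C₁·(-x)` near `0⁻` and `∫_0^y κ₂ ≤ C₂·y` near `0⁺` (finiteness of the
Lebesgue-point suprema), then for all `η ∈ (0,1)`
`∫_{-A}^0 ∫_0^η κ₁(x)κ₂(y)/(y-x) dy dx ≤ C₁C₂ [A ln(1+η/A) + η ln(1+A/η)]`. -/
theorem stmt5 (A : ℝ) (hA : 0 < A) (κ₁ κ₂ : ℝ → ℝ)
    (hκ₁loc : LocallyIntegrable κ₁) (hκ₂loc : LocallyIntegrable κ₂)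
    (hκ₁pos : ∀ x, 0 ≤ κ₁ x) (hκ₂pos : ∀ y, 0 ≤ κ₂ y)
    (C₁ C₂ : ℝ)
    (hC₁ : ∀ x ∈ Set.Ioo (-A) (0 : ℝ), ∫ ζ in x..0, κ₁ ζ ≤ C₁ * (-x))
    (hC₂ : ∀ y ∈ Set.Ioo (0 : ℝ) 1, ∫ ζ in (0 : ℝ)..y, κ₂ ζ ≤ C₂ * y)
    (η : ℝ) (hη : η ∈ Set.Ioo (0 : ℝ) 1) :
    (∫ x in (-A)..0, ∫ y in (0 : ℝ)..η, κ₁ x * κ₂ y / (y - x)) ≤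
      C₁ * C₂ * (A * Real.log (1 + η / A) + η * Real.log (1 + A / η)) := by
  obtain ⟨hη0, hη1⟩ := hη
  have hC₂0 : 0 ≤ C₂ := nonneg_of_mul_nonneg_left
    ((integral_nonneg hη0.le fun y _ => hκ₂pos y).trans (hC₂ η ⟨hη0, hη1⟩)) hη0
  have inner : ∀ x ∈ Ioo (-A) 0, ∫ y in (0 : ℝ)..η, κ₁ x * κ₂ y / (y - x)
      ≤ κ₁ x * (C₂ * (Real.log (η - x) - Real.log (-x))) := by
    intro x hx
    simp_rw [mul_div_assoc, div_eq_mul_inv]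
    rw [intervalIntegral.integral_const_mul]
    exact mul_le_mul_of_nonneg_left (integral_mul_inv_sub_le hx.2 hη0.le
      (hκ₂loc.integrableOn_isCompact isCompact_uIcc).intervalIntegrable (fun y _ => hκ₂pos y)
      (fun t ht => hC₂ t ⟨ht.1, ht.2.trans hη1⟩)) (hκ₁pos x)
  obtain ⟨hint, hle⟩ := integral_mul_log_sub_sub_log_neg_le hA hη0
    (hκ₁loc.integrableOn_isCompact isCompact_uIcc).intervalIntegrable (fun x _ => hκ₁pos x) hC₁
  calc (∫ x in (-A)..0, ∫ y in (0 : ℝ)..η, κ₁ x * κ₂ y / (y - x))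
      ≤ ∫ x in (-A)..0, C₂ * (κ₁ x * (Real.log (η - x) - Real.log (-x))) :=
        integral_mono_of_nonneg_on_Ioo (neg_nonpos.2 hA.le) (hint.const_mul C₂)
          (fun x hx => integral_nonneg hη0.le fun y hy =>
            div_nonneg (mul_nonneg (hκ₁pos x) (hκ₂pos y)) (by linarith [hy.1, hx.2]))
          (fun x hx => (inner x hx).trans_eq (mul_left_comm _ _ _))
    _ = C₂ * ∫ x in (-A)..0, κ₁ x * (Real.log (η - x) - Real.log (-x)) :=
        intervalIntegral.integral_const_mul _ _
    _ ≤ C₂ * (C₁ * (A * Real.log (1 + η / A) + η * Real.log (1 + A / η))) := by gcongr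
    _ = C₁ * C₂ * (A * Real.log (1 + η / A) + η * Real.log (1 + A / η)) := by ring
end

section
/- Let κ₂ ∈ L¹_loc(ℝ) be non-negative with C₂ := sup_{y∈(0,1)} y^{−1}∫_0^y κ₂(ζ)dζ < ∞. Then for every x < 0 and every η ∈ (0,1): ∫_0^η κ₂(y)/(y − x) dy ≤ C₂ ln(1 − η/x). -/
/-!
With `K y = ∫_0^y κ₂`, integration by parts against the decreasing weight `1 / (y - x)` gives
`∫_0^η κ₂ / (y - x) = K η / (η - x) + ∫_0^η K y / (y - x)² dy`, which is monotone in `K`.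
Replacing `K y` by `C₂ y` turns the right-hand side into `∫_0^η C₂ / (y - x) = C₂ ln (1 - η / x)`.
-/

open MeasureTheory intervalIntegral Set

theorem integral_mul_nonneg_of_forall_integral_nonneg {h w : ℝ → ℝ} {a b : ℝ} (hab : a ≤ b)
    (hh : IntervalIntegrable h volume a b) (hH : ∀ t ∈ Icc a b, 0 ≤ ∫ s in a..t, h s)
    (hw : AbsolutelyContinuousOnInterval w a b) (hw_anti : AntitoneOn w (Icc a b))
    (hwb : 0 ≤ w b) :
    0 ≤ ∫ t in a..b, h t * w t := by
  set H : ℝ → ℝ := fun t ↦ ∫ s in a..t, h s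
  have hH_ac : AbsolutelyContinuousOnInterval H a b :=
    hh.absolutelyContinuousOnInterval_intervalIntegral left_mem_uIcc
  have hderiv_H : ∫ t in a..b, h t * w t = ∫ t in a..b, deriv H t * w t := by
    refine integral_congr_ae ?_
    filter_upwards [hh.ae_hasDerivAt_integral] with t ht htab
    rw [(ht (uIoc_subset_uIcc htab) a left_mem_uIcc).deriv]
  have hw' : ∀ t ∈ Ioo a b, deriv w t ≤ 0 := fun t ht ↦ by
    rw [← derivWithin_of_mem_nhds (Icc_mem_nhds ht.1 ht.2)]
    exact hw_anti.derivWithin_nonpos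
  have hparts : ∫ t in a..b, H t * deriv w t ≤ 0 := by
    rw [← neg_nonneg, ← intervalIntegral.integral_neg]
    refine integral_nonneg_of_ae_restrict hab ?_
    rw [Measure.restrict_congr_set Ioo_ae_eq_Icc.symm]
    filter_upwards [ae_restrict_mem measurableSet_Ioo] with t ht
    exact neg_nonneg.2 (mul_nonpos_of_nonneg_of_nonpos (hH t (Ioo_subset_Icc_self ht)) (hw' t ht))
  have hboundary : 0 ≤ H b * w b := mul_nonneg (hH b (right_mem_Icc.2 hab)) hwb
  have hHa : H a = 0 := integral_same
  have hibp := hH_ac.integral_mul_deriv_eq_deriv_mul hw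
  rw [hHa, zero_mul, sub_zero] at hibp
  rw [hderiv_H]
  linarith

theorem integral_mul_le_integral_mul_of_forall_integral_le {f g w : ℝ → ℝ} {a b : ℝ} (hab : a ≤ b)
    (hf : IntervalIntegrable f volume a b) (hg : IntervalIntegrable g volume a b)
    (hfg : ∀ t ∈ Icc a b, ∫ s in a..t, f s ≤ ∫ s in a..t, g s)
    (hw : AbsolutelyContinuousOnInterval w a b) (hw_anti : AntitoneOn w (Icc a b))
    (hwb : 0 ≤ w b) :
    ∫ t in a..b, f t * w t ≤ ∫ t in a..b, g t * w t := by
  rw [← sub_nonneg, ← integral_sub (hg.mul_continuousOn hw.continuousOn)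
    (hf.mul_continuousOn hw.continuousOn)]
  simp_rw [← sub_mul]
  refine integral_mul_nonneg_of_forall_integral_nonneg hab (hg.sub hf) (fun t ht ↦ ?_)
    hw hw_anti hwb
  have hsub : uIcc a t ⊆ uIcc a b := uIcc_subset_uIcc_left (Icc_subset_uIcc ht)
  rw [integral_sub (hg.mono_set hsub) (hf.mono_set hsub), sub_nonneg]
  exact hfg t ht

theorem stmt6_general (κ₂ : ℝ → ℝ) (hκ₂loc : LocallyIntegrable κ₂)
    (C₂ : ℝ)
    (hC₂ : ∀ y ∈ Set.Ioo (0 : ℝ) 1, ∫ ζ in (0 : ℝ)..y, κ₂ ζ ≤ C₂ * y)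
    (x : ℝ) (hx : x < 0) (η : ℝ) (hη : η ∈ Set.Ioo (0 : ℝ) 1) :
    (∫ y in (0 : ℝ)..η, κ₂ y / (y - x)) ≤ C₂ * Real.log (1 - η / x) := by
  obtain ⟨hη0, hη1⟩ := hη
  have hpos : ∀ t ∈ Icc 0 η, 0 < t - x := fun t ht ↦ by linarith [ht.1]
  have hw_smooth : ContDiffOn ℝ 1 (fun t ↦ (t - x)⁻¹) (uIcc 0 η) := by
    rw [uIcc_of_le hη0.le]
    exact (contDiffOn_id.sub contDiffOn_const).inv fun t ht ↦ (hpos t ht).ne'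
  have hw_anti : AntitoneOn (fun t ↦ (t - x)⁻¹) (Icc 0 η) := fun s hs t _ hst ↦
    inv_anti₀ (hpos s hs) (by linarith)
  have hκ₂_le : ∀ t ∈ Icc 0 η, ∫ s in (0 : ℝ)..t, κ₂ s ≤ ∫ _ in (0 : ℝ)..t, C₂ := by
    rintro t ⟨ht0, htη⟩
    rw [intervalIntegral.integral_const, smul_eq_mul, sub_zero, mul_comm]
    rcases ht0.eq_or_lt with rfl | ht0
    · simp
    · exact hC₂ t ⟨ht0, htη.trans_lt hη1⟩
  calc ∫ y in (0 : ℝ)..η, κ₂ y / (y - x)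
      = ∫ y in (0 : ℝ)..η, κ₂ y * (y - x)⁻¹ := by simp only [div_eq_mul_inv]
    _ ≤ ∫ y in (0 : ℝ)..η, C₂ * (y - x)⁻¹ :=
      integral_mul_le_integral_mul_of_forall_integral_le hη0.le
        (hκ₂loc.integrableOn_isCompact isCompact_uIcc).intervalIntegrable intervalIntegrable_const
        hκ₂_le hw_smooth.absolutelyContinuousOnInterval hw_anti
        (inv_pos.2 (hpos η (right_mem_Icc.2 hη0.le))).le
    _ = C₂ * Real.log (1 - η / x) := by
      rw [intervalIntegral.integral_const_mul, integral_comp_sub_right (fun u ↦ u⁻¹), integral_inv]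
      · congr 2
        field_simp [hx.ne]
        ring
      · rw [uIcc_of_le (by linarith)]
        exact fun h ↦ by linarith [h.1]

/-- If `κ₂ ≥ 0` is locally integrable with `∫_0^y κ₂ ≤ C₂·y` for `y ∈ (0,1)`,
then for every `x < 0` and `η ∈ (0,1)`:
`∫_0^η κ₂(y)/(y-x) dy ≤ C₂ ln(1 - η/x)`. -/
theorem stmt6 (κ₂ : ℝ → ℝ) (hκ₂loc : LocallyIntegrable κ₂)
    (hκ₂pos : ∀ y, 0 ≤ κ₂ y) (C₂ : ℝ)
    (hC₂ : ∀ y ∈ Set.Ioo (0 : ℝ) 1, ∫ ζ in (0 : ℝ)..y, κ₂ ζ ≤ C₂ * y)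
    (x : ℝ) (hx : x < 0) (η : ℝ) (hη : η ∈ Set.Ioo (0 : ℝ) 1) :
    (∫ y in (0 : ℝ)..η, κ₂ y / (y - x)) ≤ C₂ * Real.log (1 - η / x) :=
  stmt6_general κ₂ hκ₂loc C₂ hC₂ x hx η hη
end
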